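/- arXiv:1512.05808 — 8 statements merged into one kernel-verified Lean document; each statement's English description precedes it below -/
import Mathlib

section
/- Suppose f(h) > f(b) and Xh ≠ Xb. Then g(α) = f((1−α)h + αb) is strictly convex on ℝ and has exactly one minimizer α* over ℝ, and this minimizer satisfies α* > 0. -/
/-!
Along the segment, the residual is `X h - y + α • X (b - h)`, so the quadratic part of `g` is
`‖X (b - h)‖²`-strongly convex, while the `ℓ¹` part is convex; with `X h ≠ X b` this makes `g`
strictly convex and coercive, hence it has a unique minimizer. Since `g 1 = f b < f h = g 0`,
convexity rules out a minimizer at or to the left of `0`.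
-/

open Filter Matrix Set

theorem StrictConvexOn.existsUnique_isMinOn {E : Type*} [NormedAddCommGroup E] [NormedSpace ℝ E]
    [FiniteDimensional ℝ E] {g : E → ℝ} (hg : StrictConvexOn ℝ univ g)
    (hcoercive : Tendsto g (cocompact E) atTop) : ∃! a, IsMinOn g univ a := by
  have hcont : Continuous g := by
    simpa [continuousOn_univ] using hg.convexOn.continuousOn_interior
  obtain ⟨a, ha⟩ := hcont.exists_forall_le hcoercive
  exact ⟨a, fun x _ => ha x, fun a' ha' =>
    hg.eq_of_isMinOn ha' (fun x _ => ha x) (mem_univ _) (mem_univ _)⟩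

theorem ConvexOn.lt_of_isMinOn {g : ℝ → ℝ} (hg : ConvexOn ℝ univ g) {x y a : ℝ} (hxy : x < y)
    (hgxy : g y < g x) (ha : IsMinOn g univ a) : x < a := by
  by_contra! hax
  have hx : x ∈ segment ℝ a y := by
    rw [segment_eq_Icc (hax.trans hxy.le)]; exact ⟨hax, hxy.le⟩
  have := hg.le_on_segment (mem_univ a) (mem_univ y) hx
  rw [max_eq_right (ha (mem_univ y))] at this
  linarith

theorem tendsto_sq_add_mul_cocompact {c v : ℝ} (hv : v ≠ 0) :
    Tendsto (fun α : ℝ => (c + α * v) ^ 2) (cocompact ℝ) atTop := by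
  have hline : Tendsto (fun α : ℝ => c + α * v) (cocompact ℝ) (cocompact ℝ) :=
    ((Homeomorph.mulRight₀ v hv).trans (Homeomorph.addLeft c)).isClosedEmbedding.tendsto_cocompact
  simpa only [Function.comp_def, Real.norm_eq_abs, sq_abs] using
    (tendsto_pow_atTop two_ne_zero).comp (tendsto_norm_cocompact_atTop.comp hline)

section LassoLine

variable {ι κ : Type*} [Fintype ι] [Fintype κ]

theorem strongConvexOn_half_sum_sq_add_mul (c v : ι → ℝ) :
    StrongConvexOn univ (∑ k, v k ^ 2) fun α : ℝ => 1 / 2 * ∑ k, (c k + α * v k) ^ 2 := by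
  refine ⟨convex_univ, fun x _ z _ a e _ _ hae => le_of_eq ?_⟩
  obtain rfl := eq_sub_of_add_eq' hae
  simp only [smul_eq_mul, Real.norm_eq_abs, sq_abs, Finset.mul_sum, Finset.sum_div,
    Finset.sum_mul, ← Finset.sum_add_distrib, ← Finset.sum_sub_distrib]
  exact Finset.sum_congr rfl fun k _ => by ring

theorem convexOn_sum_abs_add_mul (h d : κ → ℝ) :
    ConvexOn ℝ univ fun α : ℝ => ∑ i, |h i + α * d i| := by
  refine ⟨convex_univ, fun x _ z _ a e ha he hae => ?_⟩
  obtain rfl := eq_sub_of_add_eq' hae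
  simp only [smul_eq_mul, Finset.mul_sum, ← Finset.sum_add_distrib]
  refine Finset.sum_le_sum fun i _ => ?_
  calc |h i + (a * x + (1 - a) * z) * d i|
      = |a * (h i + x * d i) + (1 - a) * (h i + z * d i)| := by ring_nf
    _ ≤ |a * (h i + x * d i)| + |(1 - a) * (h i + z * d i)| := abs_add_le _ _
    _ = a * |h i + x * d i| + (1 - a) * |h i + z * d i| := by
        rw [abs_mul, abs_mul, abs_of_nonneg ha, abs_of_nonneg he]

noncomputable def lassoLine (c v : ι → ℝ) (lam : ℝ) (h d : κ → ℝ) (α : ℝ) : ℝ :=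
  1 / 2 * ∑ k, (c k + α * v k) ^ 2 + lam * ∑ i, |h i + α * d i|

theorem lasso_segment_eq_lassoLine (X : Matrix ι κ ℝ) (y : ι → ℝ) (lam : ℝ) (h b : κ → ℝ)
    (α : ℝ) :
    1 / 2 * ∑ k, ((X *ᵥ ((1 - α) • h + α • b)) k - y k) ^ 2 + lam * ∑ i, |((1 - α) • h + α • b) i|
      = lassoLine (X *ᵥ h - y) (X *ᵥ (b - h)) lam h (b - h) α := by
  have hline : (1 - α) • h + α • b = h + α • (b - h) := by module
  rw [hline]
  simp only [lassoLine, mulVec_add, mulVec_smul, Pi.add_apply, Pi.smul_apply,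
    Pi.sub_apply, smul_eq_mul]
  congr 2
  exact Finset.sum_congr rfl fun k _ => by ring

variable {c v : ι → ℝ} {lam : ℝ} {h d : κ → ℝ}

theorem strictConvexOn_lassoLine (hv : v ≠ 0) (hlam : 0 ≤ lam) :
    StrictConvexOn ℝ univ (lassoLine c v lam h d) := by
  obtain ⟨k, hk⟩ := Function.ne_iff.mp hv
  have hm : 0 < ∑ k, v k ^ 2 :=
    Finset.sum_pos' (fun j _ => sq_nonneg (v j)) ⟨k, Finset.mem_univ k, sq_pos_of_ne_zero hk⟩
  refine ((strongConvexOn_half_sum_sq_add_mul c v).add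
    ((convexOn_sum_abs_add_mul h d).smul hlam).uniformConvexOn_zero).strictConvexOn
    fun r hr => ?_
  simp only [Pi.add_apply, Pi.zero_apply, add_zero]
  exact mul_pos (half_pos hm) (sq_pos_of_ne_zero hr)

theorem tendsto_lassoLine_cocompact (hv : v ≠ 0) (hlam : 0 ≤ lam) :
    Tendsto (lassoLine c v lam h d) (cocompact ℝ) atTop := by
  obtain ⟨k, hk⟩ := Function.ne_iff.mp hv
  refine tendsto_atTop_mono (fun α => ?_)
    ((tendsto_sq_add_mul_cocompact (c := c k) hk).const_mul_atTop one_half_pos)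
  have hk_le : (c k + α * v k) ^ 2 ≤ ∑ j, (c j + α * v j) ^ 2 :=
    Finset.single_le_sum (fun j _ => sq_nonneg (c j + α * v j)) (Finset.mem_univ k)
  have hl1 : 0 ≤ lam * ∑ i, |h i + α * d i| := by positivity
  rw [lassoLine]
  linarith

end LassoLine

theorem stmt_1_general {n p : ℕ} (X : Matrix (Fin n) (Fin p) ℝ) (y : Fin n → ℝ)
    (lam : ℝ) (hlam : 0 ≤ lam)
    (f : (Fin p → ℝ) → ℝ)
    (hf : ∀ β, f β = (1 / 2) * ∑ k, (X.mulVec β k - y k) ^ 2 + lam * ∑ i, |β i|)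
    (h b : Fin p → ℝ)
    (g : ℝ → ℝ)
    (hg : ∀ α : ℝ, g α = f ((1 - α) • h + α • b))
    (hfb : f b < f h)
    (hXhb : X.mulVec h ≠ X.mulVec b) :
    StrictConvexOn ℝ Set.univ g ∧
    (∃! αstar : ℝ, ∀ α : ℝ, g αstar ≤ g α) ∧
    (∀ αstar : ℝ, (∀ α : ℝ, g αstar ≤ g α) → 0 < αstar) := by
  have hg_eq : g = lassoLine (X *ᵥ h - y) (X *ᵥ (b - h)) lam h (b - h) :=
    funext fun α => by rw [hg, hf, lasso_segment_eq_lassoLine]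
  have hv : X *ᵥ (b - h) ≠ 0 := by simpa [mulVec_sub, sub_eq_zero] using hXhb.symm
  have hconv : StrictConvexOn ℝ univ g := hg_eq ▸ strictConvexOn_lassoLine hv hlam
  have hmin_pos : ∀ a, IsMinOn g univ a → 0 < a :=
    fun a => hconv.convexOn.lt_of_isMinOn zero_lt_one (by simpa [hg] using hfb)
  simp only [← isMinOn_univ_iff]
  exact ⟨hconv, hconv.existsUnique_isMinOn (hg_eq ▸ tendsto_lassoLine_cocompact hv hlam),
    hmin_pos⟩

/-- Suppose f(h) > f(b) and Xh ≠ Xb.  Then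
g(α) = f((1−α)h + αb) is strictly convex on ℝ, has exactly one minimizer
α* over ℝ, and this minimizer satisfies α* > 0. -/
theorem stmt_1 {n p : ℕ} (X : Matrix (Fin n) (Fin p) ℝ) (y : Fin n → ℝ)
    (lam : ℝ) (hlam : 0 ≤ lam)
    (hX : ∀ i : Fin p, Xᵀ i ≠ 0)
    (f : (Fin p → ℝ) → ℝ)
    (hf : ∀ β, f β = (1 / 2) * ∑ k, (X.mulVec β k - y k) ^ 2 + lam * ∑ i, |β i|)
    (h b : Fin p → ℝ)
    (g : ℝ → ℝ)
    (hg : ∀ α : ℝ, g α = f ((1 - α) • h + α • b))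
    (hfb : f b < f h)
    (hXhb : X.mulVec h ≠ X.mulVec b) :
    StrictConvexOn ℝ Set.univ g ∧
    (∃! αstar : ℝ, ∀ α : ℝ, g αstar ≤ g α) ∧
    (∀ αstar : ℝ, (∀ α : ℝ, g αstar ≤ g α) → 0 < αstar) :=
  stmt_1_general X y lam hlam f hf h b g hg hfb hXhb
end

section
/- Every complex eigenvalue σ of G satisfies |σ| ≤ 1; that is, if z ∈ ℂ^p is nonzero and the complexification of G satisfies Gz = σz, then |σ| ≤ 1. -/
/-!
Let `z ≠ 0` satisfy `G z = σ z`, i.e. `-U z = σ (L + D) z`, and put `a = z*Lz`, `b = z*Dz > 0`.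
Since `XᵀX` is symmetric, `U = Lᵀ` and so `z*Uz = conj a`; the eigen equation becomes
`σ (a + b) = -conj a`. Positive semidefiniteness of `XᵀX = L + D + U` gives `2 Re a + b ≥ 0`,
hence `|a + b|² - |a|² = b (2 Re a + b) ≥ 0` and `|σ| = |a| / |a + b| ≤ 1`.
-/

open Matrix ComplexConjugate
open scoped ComplexOrder

namespace RCLike

variable {𝕜 : Type*} [RCLike 𝕜]

theorem norm_le_one_of_mul_add_ofReal_eq_neg_conj {σ a : 𝕜} {b : ℝ} (hb : 0 < b)
    (hab : 0 ≤ 2 * re a + b) (h : σ * (a + b) = -conj a) : ‖σ‖ ≤ 1 := by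
  have hsq : ‖a + b‖ ^ 2 = ‖a‖ ^ 2 + b * (2 * re a + b) := by
    simp only [norm_sq_eq_def, map_add, ofReal_re, ofReal_im]
    ring
  have hpos : 0 < ‖a + b‖ := by
    refine norm_pos_iff.mpr fun h0 => ?_
    have hre := congrArg re h0
    simp only [map_add, ofReal_re, map_zero] at hre
    linarith
  have hle : ‖a‖ ≤ ‖a + b‖ :=
    (pow_le_pow_iff_left₀ (norm_nonneg _) (norm_nonneg _) two_ne_zero).1
      (by nlinarith [mul_nonneg hb.le hab])
  have hmul : ‖σ‖ * ‖a + b‖ = ‖a‖ := by rw [← norm_mul, h, norm_neg, norm_conj]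
  calc ‖σ‖ = ‖a‖ / ‖a + b‖ := by rw [← hmul, mul_div_cancel_right₀ _ hpos.ne']
    _ ≤ 1 := (div_le_one hpos).mpr hle

end RCLike

namespace Matrix

section Hermitian

variable {ι 𝕜 : Type*} [Fintype ι] [RCLike 𝕜]

theorem star_dotProduct_conjTranspose_mulVec (M : Matrix ι ι 𝕜) (z : ι → 𝕜) :
    star z ⬝ᵥ (Mᴴ *ᵥ z) = conj (star z ⬝ᵥ (M *ᵥ z)) := by
  rw [dotProduct_mulVec, ← star_mulVec, star_dotProduct]
  rfl

theorem norm_le_one_of_neg_conjTranspose_mulVec_eq_smul_mulVec {L D : Matrix ι ι 𝕜}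
    (hA : (L + D + Lᴴ).PosSemidef) (hD : D.PosDef) {σ : 𝕜} {z : ι → 𝕜} (hz : z ≠ 0)
    (h : -(Lᴴ *ᵥ z) = σ • ((L + D) *ᵥ z)) : ‖σ‖ ≤ 1 := by
  set a := star z ⬝ᵥ (L *ᵥ z)
  set b := RCLike.re (star z ⬝ᵥ (D *ᵥ z))
  obtain ⟨hb_pos, hb_im⟩ := RCLike.pos_iff.1 (hD.dotProduct_mulVec_pos hz)
  have hb : star z ⬝ᵥ (D *ᵥ z) = b :=
    (RCLike.ext (RCLike.ofReal_re b) (by rw [RCLike.ofReal_im, hb_im])).symm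
  refine RCLike.norm_le_one_of_mul_add_ofReal_eq_neg_conj (a := a) hb_pos ?_ ?_
  · have hq := hA.dotProduct_mulVec_nonneg z
    simp only [add_mulVec, dotProduct_add, hb, star_dotProduct_conjTranspose_mulVec] at hq
    have hre := (RCLike.nonneg_iff.1 hq).1
    simp only [map_add, RCLike.ofReal_re, RCLike.conj_re] at hre
    linarith
  · have hz_eig := congrArg (star z ⬝ᵥ ·) h
    simp only [dotProduct_neg, dotProduct_smul, add_mulVec, dotProduct_add, hb, smul_eq_mul,
      star_dotProduct_conjTranspose_mulVec] at hz_eig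
    exact hz_eig.symm

end Hermitian

theorem conjTranspose_map_ofReal {m n 𝕜 : Type*} [RCLike 𝕜] (A : Matrix m n ℝ) :
    (A.map ((↑) : ℝ → 𝕜))ᴴ = Aᵀ.map (↑) := by
  rw [← conjTranspose_eq_transpose_of_trivial A]
  exact (conjTranspose_map _ fun r => (RCLike.conj_ofReal r).symm).symm

theorem transpose_mul_self_apply_self_pos {m n R : Type*} [Fintype m] [CommRing R]
    [LinearOrder R] [IsStrictOrderedRing R] {X : Matrix m n R} {i : n} (hi : Xᵀ i ≠ 0) :
    0 < (Xᵀ * X) i i := by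
  have hdot : (Xᵀ * X) i i = Xᵀ i ⬝ᵥ Xᵀ i := mul_apply'
  rw [hdot]
  exact lt_of_le_of_ne (Finset.sum_nonneg fun k _ => mul_self_nonneg _)
    (Ne.symm (dotProduct_self_eq_zero.not.2 hi))

theorem eq_diagonal_diag {ι R : Type*} [DecidableEq ι] [Zero R] {A D : Matrix ι ι R}
    (hD : ∀ i j, D i j = if i = j then A i j else 0) : D = diagonal A.diag := by
  ext i j
  rw [hD, diagonal_apply]
  split_ifs with h <;> simp only [h, diag_apply]

section Splitting

variable {ι R : Type*} [LinearOrder ι] {A L D U : Matrix ι ι R}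

theorem lower_add_diag_add_upper_eq [AddZeroClass R]
    (hL : ∀ i j, L i j = if j < i then A i j else 0)
    (hD : ∀ i j, D i j = if i = j then A i j else 0)
    (hU : ∀ i j, U i j = if i < j then A i j else 0) : L + D + U = A := by
  ext i j
  rcases lt_trichotomy i j with h | rfl | h
  · simp [hL, hD, hU, h, h.ne, h.not_gt]
  · simp [hL, hD, hU]
  · simp [hL, hD, hU, h, h.ne', h.not_gt]

theorem upper_eq_transpose_lower [Zero R] (hA : A.IsSymm)
    (hL : ∀ i j, L i j = if j < i then A i j else 0)
    (hU : ∀ i j, U i j = if i < j then A i j else 0) : U = Lᵀ := by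
  ext i j
  rw [hU, transpose_apply, hL, hA.apply j i]

theorem det_lower_add_diag [Fintype ι] [CommRing R]
    (hL : ∀ i j, L i j = if j < i then A i j else 0)
    (hD : ∀ i j, D i j = if i = j then A i j else 0) :
    (L + D).det = ∏ i, A i i := by
  have hlower : (L + D).IsLowerTriangular := fun i j (hij : i < j) => by
    simp [hL, hD, hij.not_gt, hij.ne]
  rw [det_of_isLowerTriangular _ hlower]
  simp [hL, hD]

end Splitting

theorem neg_map_mulVec_eq_smul_map_mulVec {ι R S : Type*} [Fintype ι] [CommRing R]
    [CommRing S] (f : R →+* S) {M G N : Matrix ι ι R} (hMG : M * G = -N) {σ : S}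
    {z : ι → S} (h : G.map f *ᵥ z = σ • z) : -(N.map f *ᵥ z) = σ • (M.map f *ᵥ z) := by
  rw [← mulVec_smul, ← h, mulVec_mulVec, ← Matrix.map_mul, hMG, Matrix.map_neg _ (map_neg f),
    neg_mulVec]

end Matrix

open Matrix BigOperators

/-- Every complex eigenvalue σ of G = −(L+D)⁻¹U satisfies
|σ| ≤ 1: if z ∈ ℂ^p is nonzero and the complexification of G satisfies
Gz = σz, then |σ| ≤ 1. -/
theorem stmt_3 {n p : ℕ} (X : Matrix (Fin n) (Fin p) ℝ)
    (hX : ∀ i : Fin p, Xᵀ i ≠ 0)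
    (L D U G : Matrix (Fin p) (Fin p) ℝ)
    (hL : ∀ i j, L i j = if j < i then (Xᵀ * X) i j else 0)
    (hD : ∀ i j, D i j = if i = j then (Xᵀ * X) i j else 0)
    (hU : ∀ i j, U i j = if i < j then (Xᵀ * X) i j else 0)
    (hG : G = -((L + D)⁻¹ * U))
    (σ : ℂ) (z : Fin p → ℂ) (hz : z ≠ 0)
    (heig : (G.map (fun r : ℝ => (r : ℂ))).mulVec z = σ • z) :
    ‖σ‖ ≤ 1 := by
  have hdiag_pos i : 0 < (Xᵀ * X) i i := transpose_mul_self_apply_self_pos (hX i)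
  have hLD : (L + D) * G = -U := by
    have hdet : IsUnit (L + D).det := by
      rw [det_lower_add_diag hL hD]
      exact (Finset.prod_pos fun i _ => hdiag_pos i).ne'.isUnit
    rw [hG, mul_neg, ← mul_assoc, mul_nonsing_inv _ hdet, one_mul]
  set φ := (Complex.ofRealHom : ℝ →+* ℂ).mapMatrix (m := Fin p)
  have hUL : (φ L)ᴴ = φ U := by
    rw [upper_eq_transpose_lower (transpose_mul Xᵀ X) hL hU]
    exact conjTranspose_map_ofReal L
  refine norm_le_one_of_neg_conjTranspose_mulVec_eq_smul_mulVec (L := φ L) (D := φ D)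
    ?_ ?_ hz ?_
  · have hgram : φ (Xᵀ * X) = (X.map Complex.ofRealHom)ᴴ * X.map Complex.ofRealHom := by
      rw [RingHom.mapMatrix_apply, Matrix.map_mul]
      exact congrArg (· * _) (conjTranspose_map_ofReal X).symm
    rw [hUL, ← map_add, ← map_add, lower_add_diag_add_upper_eq hL hD hU, hgram]
    exact posSemidef_conjTranspose_mul_self _
  · rw [eq_diagonal_diag hD, RingHom.mapMatrix_apply, diagonal_map (map_zero _)]
    exact PosDef.diagonal fun i => Complex.zero_lt_real.2 (hdiag_pos i)
  · rw [hUL, ← map_add]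
    exact neg_map_mulVec_eq_smul_map_mulVec Complex.ofRealHom hLD heig
end

section
/- Let x ∈ ℝⁿ with x ≠ 0, a ∈ ℝⁿ, and λ ≥ 0. Then the function t ↦ (1/2)‖a − t·x‖₂² + λ|t| on ℝ has a unique minimizer, given by t* = S(xᵀa, λ)/‖x‖₂². -/
open BigOperators

/-- The shrinkage (soft-thresholding) function. -/
noncomputable def shrink (x lam : ℝ) : ℝ :=
  if x > lam then x - lam else if x < -lam then x + lam else 0

/-!
Expanding the square, `φ t = ½‖a‖² + (s/2) t² - c t + λ|t|` with `c = xᵀa` and `s = ‖x‖² > 0`.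
For `T = S(c, λ)/s` the residual `g = c - sT = c - S(c, λ)` satisfies `|g| ≤ λ` and `g T = λ|T|`,
i.e. `g` is a subgradient of `λ|·|` at `T`. Hence `φ T + (s/2)(t - T)² ≤ φ t` for every `t`,
which gives both minimality and uniqueness.
-/

lemma abs_sub_shrink_le {c lam : ℝ} (hlam : 0 ≤ lam) : |c - shrink c lam| ≤ lam := by
  unfold shrink
  split_ifs <;> rw [abs_le] <;> constructor <;> linarith

lemma sub_shrink_mul_shrink (c lam : ℝ) :
    (c - shrink c lam) * shrink c lam = lam * |shrink c lam| := by
  unfold shrink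
  split_ifs with hpos hneg
  · rw [abs_of_pos (sub_pos.mpr hpos)]; ring
  · rw [abs_of_neg (by linarith)]; ring
  · simp

lemma add_mul_sub_le_mul_abs {g lam T : ℝ} (hg : |g| ≤ lam) (hgT : g * T = lam * |T|) (t : ℝ) :
    lam * |T| + g * (t - T) ≤ lam * |t| := by
  have hgt : g * t ≤ lam * |t| :=
    calc g * t ≤ |g| * |t| := by rw [← abs_mul]; exact le_abs_self _
      _ ≤ lam * |t| := mul_le_mul_of_nonneg_right hg (abs_nonneg t)
  linarith

noncomputable def scalarLasso (s c lam t : ℝ) : ℝ := s / 2 * t ^ 2 - c * t + lam * |t|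

lemma scalarLasso_shrink_div_add_sq_le {s c lam : ℝ} (hs : 0 < s) (hlam : 0 ≤ lam) (t : ℝ) :
    scalarLasso s c lam (shrink c lam / s) + s / 2 * (t - shrink c lam / s) ^ 2
      ≤ scalarLasso s c lam t := by
  set T := shrink c lam / s
  have hsT : s * T = shrink c lam := mul_div_cancel₀ _ hs.ne'
  have hsub : (c - s * T) * T = lam * |T| := by
    rw [hsT, abs_div, abs_of_pos hs, ← mul_div_assoc, ← mul_div_assoc, sub_shrink_mul_shrink]
  have hg : |c - s * T| ≤ lam := hsT ▸ abs_sub_shrink_le hlam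
  have hgap : scalarLasso s c lam t - scalarLasso s c lam T - s / 2 * (t - T) ^ 2
      = lam * |t| - (lam * |T| + (c - s * T) * (t - T)) := by
    unfold scalarLasso; ring
  linarith [add_mul_sub_le_mul_abs hg hsub t]

lemma unique_minimizer_of_add_sq_le {f : ℝ → ℝ} {T κ : ℝ} (hκ : 0 < κ)
    (h : ∀ t, f T + κ * (t - T) ^ 2 ≤ f t) :
    (∀ t, f T ≤ f t) ∧ ∀ t', (∀ t, f t' ≤ f t) → t' = T := by
  refine ⟨fun t => by nlinarith [h t, sq_nonneg (t - T)], fun t' ht' => ?_⟩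
  have hsq : κ * (t' - T) ^ 2 ≤ 0 := by linarith [h t', ht' T]
  have : (t' - T) ^ 2 = 0 :=
    le_antisymm (nonpos_of_mul_nonpos_right hsq hκ) (sq_nonneg _)
  exact sub_eq_zero.mp (pow_eq_zero_iff two_ne_zero |>.mp this)

lemma sum_sq_pos_of_ne_zero {ι : Type*} [Fintype ι] {x : ι → ℝ} (hx : x ≠ 0) :
    0 < ∑ k, x k ^ 2 := by
  obtain ⟨k, hk⟩ := Function.ne_iff.mp hx
  exact Finset.sum_pos' (fun i _ => sq_nonneg _) ⟨k, Finset.mem_univ k, pow_two_pos_of_ne_zero hk⟩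

lemma sum_sub_mul_sq {ι : Type*} [Fintype ι] (x a : ι → ℝ) (t : ℝ) :
    ∑ k, (a k - t * x k) ^ 2 = ∑ k, a k ^ 2 - 2 * t * ∑ k, x k * a k + t ^ 2 * ∑ k, x k ^ 2 := by
  simp only [Finset.mul_sum, ← Finset.sum_sub_distrib, ← Finset.sum_add_distrib]
  exact Finset.sum_congr rfl fun k _ => by ring

/-- Let x ∈ ℝⁿ with x ≠ 0, a ∈ ℝⁿ, and λ ≥ 0.  Then the
function t ↦ (1/2)‖a − t·x‖₂² + λ|t| on ℝ has a unique minimizer, given by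
t* = S(xᵀa, λ)/‖x‖₂². -/
theorem stmt_7 {n : ℕ} (x a : Fin n → ℝ) (hx : x ≠ 0)
    (lam : ℝ) (hlam : 0 ≤ lam)
    (φ : ℝ → ℝ)
    (hφ : ∀ t : ℝ, φ t = (1 / 2) * ∑ k, (a k - t * x k) ^ 2 + lam * |t|) :
    (∀ t : ℝ, φ (shrink (∑ k, x k * a k) lam / ∑ k, (x k) ^ 2) ≤ φ t) ∧
    (∀ t' : ℝ, (∀ t : ℝ, φ t' ≤ φ t) →
      t' = shrink (∑ k, x k * a k) lam / ∑ k, (x k) ^ 2) := by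
  have hs := sum_sq_pos_of_ne_zero hx
  have hφ_eq : ∀ t, φ t = (1 / 2) * ∑ k, a k ^ 2
      + scalarLasso (∑ k, x k ^ 2) (∑ k, x k * a k) lam t := fun t => by
    rw [hφ, sum_sub_mul_sq, scalarLasso]; ring
  refine unique_minimizer_of_add_sq_le (half_pos hs) fun t => ?_
  rw [hφ_eq, hφ_eq]
  linarith [scalarLasso_shrink_div_add_sq_le (c := ∑ k, x k * a k) hs hlam t]
end

section
/- Let β ∈ ℝ^p, let i be a coordinate index, let r = y − Xβ, and let β' ∈ ℝ^p agree with β in all coordinates except that β'_i = S(β_i + x_iᵀr/‖x_i‖₂², λ/‖x_i‖₂²). Then f(β') ≤ f(β), and if f(β') = f(β) then β' = β. -/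
open Matrix BigOperators

lemma shrink_key (a lam z t : ℝ) (ha : 0 < a) (hlam : 0 ≤ lam) :
    a / 2 * (shrink z (lam / a) - z) ^ 2 + lam * |shrink z (lam / a)|
      + a / 2 * (t - shrink z (lam / a)) ^ 2
      ≤ a / 2 * (t - z) ^ 2 + lam * |t| := by
  have hla : a * (lam / a) = lam := by field_simp
  have hμ : 0 ≤ lam / a := div_nonneg hlam ha.le
  rcases abs_cases t with ⟨h1, h2⟩ | ⟨h1, h2⟩ <;>
  unfold shrink <;> split_ifs with hc1 hc2 <;> rw [h1]
  · rw [abs_of_nonneg (by linarith)]; nlinarith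
  · rw [abs_of_nonpos (by linarith)]; nlinarith
  · simp only [abs_zero]; push_neg at hc1 hc2
    have h3 : a * z ≤ lam := by nlinarith
    nlinarith [mul_le_mul_of_nonneg_right h3 h2]
  · rw [abs_of_nonneg (by linarith)]; nlinarith
  · rw [abs_of_nonpos (by linarith)]; nlinarith
  · simp only [abs_zero]; push_neg at hc1 hc2
    have h4 : -lam ≤ a * z := by nlinarith
    nlinarith [mul_le_mul_of_nonpos_right h4 (le_of_lt h2)]

/-- Let β ∈ ℝ^p, let i be a coordinate index, let r = y − Xβ,
and let β' agree with β except that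
β'_i = S(β_i + x_iᵀr/‖x_i‖₂², λ/‖x_i‖₂²).  Then f(β') ≤ f(β), and if
f(β') = f(β) then β' = β. -/
theorem stmt_8 {n p : ℕ} (X : Matrix (Fin n) (Fin p) ℝ) (y : Fin n → ℝ)
    (lam : ℝ) (hlam : 0 ≤ lam)
    (hX : ∀ i : Fin p, Xᵀ i ≠ 0)
    (f : (Fin p → ℝ) → ℝ)
    (hf : ∀ β, f β = (1 / 2) * ∑ k, (X.mulVec β k - y k) ^ 2 + lam * ∑ i, |β i|)
    (β : Fin p → ℝ) (i : Fin p)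
    (r : Fin n → ℝ) (hr : r = y - X.mulVec β)
    (β' : Fin p → ℝ)
    (hβ' : β' = Function.update β i
      (shrink (β i + (∑ k, X k i * r k) / ∑ k, (X k i) ^ 2)
        (lam / ∑ k, (X k i) ^ 2))) :
    f β' ≤ f β ∧ (f β' = f β → β' = β) := by
  set a : ℝ := ∑ k, (X k i) ^ 2 with ha_def
  have ha : 0 < a := by
    have := hX i
    rw [Function.ne_iff] at this
    obtain ⟨k, hk⟩ := this
    exact Finset.sum_pos' (fun j _ => sq_nonneg _)
      ⟨k, Finset.mem_univ k, by
        have : X k i ≠ 0 := hk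
        positivity⟩
  set xr : ℝ := ∑ k, X k i * r k with hxr_def
  set z : ℝ := β i + xr / a with hz_def
  set C : ℝ := (1 / 2) * ∑ k, (r k) ^ 2 - xr ^ 2 / (2 * a)
      + lam * ∑ j ∈ Finset.univ.erase i, |β j| with hC_def
  -- key expansion of f along coordinate i
  have hexp : ∀ t : ℝ, f (Function.update β i t) = a / 2 * (t - z) ^ 2 + lam * |t| + C := by
    intro t
    have hmv : ∀ k, X.mulVec (Function.update β i t) k - y k
        = X k i * (t - β i) - r k := by
      intro k
      have : X.mulVec (Function.update β i t) k
          = X.mulVec β k + X k i * (t - β i) := by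
        simp only [Matrix.mulVec, dotProduct]
        rw [← Finset.add_sum_erase _ _ (Finset.mem_univ i),
            ← Finset.add_sum_erase _ (fun j => X k j * β j) (Finset.mem_univ i)]
        have : ∑ j ∈ Finset.univ.erase i, X k j * Function.update β i t j
            = ∑ j ∈ Finset.univ.erase i, X k j * β j := by
          apply Finset.sum_congr rfl
          intro j hj
          rw [Function.update_of_ne (Finset.ne_of_mem_erase hj)]
        rw [this, Function.update_self]
        ring
      rw [this, hr]
      simp
      ring
    have habs : ∑ j, |Function.update β i t j|
        = |t| + ∑ j ∈ Finset.univ.erase i, |β j| := by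
      rw [← Finset.add_sum_erase _ (fun j => |Function.update β i t j|) (Finset.mem_univ i)]
      congr 1
      · rw [Function.update_self]
      · apply Finset.sum_congr rfl
        intro j hj
        rw [Function.update_of_ne (Finset.ne_of_mem_erase hj)]
    rw [hf, habs]
    have hsq : ∑ k, (X.mulVec (Function.update β i t) k - y k) ^ 2
        = a * (t - β i) ^ 2 - xr * (2 * (t - β i)) + ∑ k, (r k) ^ 2 := by
      have e : ∀ k : Fin n, (X k i * (t - β i) - r k) ^ 2
          = (X k i) ^ 2 * (t - β i) ^ 2 - X k i * r k * (2 * (t - β i)) + (r k) ^ 2 :=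
        fun k => by ring
      simp only [hmv, e]
      rw [Finset.sum_add_distrib, Finset.sum_sub_distrib, ← Finset.sum_mul, ← Finset.sum_mul]
    rw [hsq, hC_def, hz_def]
    have haa : a ≠ 0 := ne_of_gt ha
    field_simp
    ring
  set s : ℝ := shrink z (lam / a) with hs_def
  have hkey := shrink_key a lam z (β i) ha hlam
  have hfβ : f β = a / 2 * (β i - z) ^ 2 + lam * |β i| + C := by
    have := hexp (β i)
    rwa [Function.update_eq_self] at this
  have hfβ' : f β' = a / 2 * (s - z) ^ 2 + lam * |s| + C := by
    rw [hβ']; exact hexp s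
  clear_value a xr z C s
  rw [← hs_def] at hkey
  have hmain : f β' + a / 2 * (β i - s) ^ 2 ≤ f β := by
    rw [hfβ, hfβ']; linarith
  constructor
  · nlinarith [sq_nonneg (β i - s), ha.le]
  · intro heq
    have h0 : a / 2 * (β i - s) ^ 2 ≤ 0 := by linarith
    have h1 : (β i - s) ^ 2 = 0 := by nlinarith [sq_nonneg (β i - s)]
    have h2 : s = β i := by nlinarith [sq_nonneg (β i - s)]
    rw [hβ', h2, Function.update_eq_self]
end

section
/- A point β* ∈ ℝ^p minimizes f over ℝ^p if and only if for every coordinate i, x_iᵀ(y − Xβ*) ∈ λ·SGN(β*_i), where λ·SGN(t) denotes the set {λs : s ∈ SGN(t)}. -/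
/-!
Write `c = Xᵀ(y - Xβ*)`. Expanding the square, `f(β* + d) - f(β*)` equals `½‖Xd‖²` plus the sum
over coordinates of `λ(|β*ᵢ + dᵢ| - |β*ᵢ|) - cᵢ dᵢ`, and `cᵢ ∈ λ·SGN(β*ᵢ)` says exactly that `cᵢ`
is a subgradient of `λ|·|` at `β*ᵢ`, i.e. that every coordinate term is nonnegative. This gives
sufficiency. Conversely, moving only the `i`-th coordinate of β* by `u` shows that the `i`-th term
is at least `-a u²` for a constant `a`, and convexity of `|·|` removes this quadratic error.
-/

open Matrix BigOperators

noncomputable def SGN (t : ℝ) : Set ℝ :=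
  if t > 0 then {1} else if t < 0 then {-1} else Set.Icc (-1) 1

open Filter Topology

lemma mem_SGN_iff {s t : ℝ} : s ∈ SGN t ↔ |s| ≤ 1 ∧ s * t = |t| := by
  unfold SGN
  split_ifs with hpos hneg
  · rw [Set.mem_singleton_iff, abs_of_pos hpos]
    constructor
    · rintro rfl; norm_num
    · rintro ⟨-, h⟩; exact (mul_eq_right₀ hpos.ne').1 h
  · rw [Set.mem_singleton_iff, abs_of_neg hneg]
    constructor
    · rintro rfl; norm_num
    · rintro ⟨-, h⟩; nlinarith
  · obtain rfl : t = 0 := by linarith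
    simp [abs_le]

lemma SGN_nonempty (t : ℝ) : (SGN t).Nonempty := by
  unfold SGN
  split_ifs <;> simp

lemma mem_image_mul_SGN_iff {lam c t : ℝ} (hlam : 0 ≤ lam) :
    c ∈ (fun s => lam * s) '' SGN t ↔ |c| ≤ lam ∧ c * t = lam * |t| := by
  constructor
  · rintro ⟨s, hs, rfl⟩
    obtain ⟨hs1, hst⟩ := mem_SGN_iff.1 hs
    rw [abs_mul, abs_of_nonneg hlam, mul_assoc, hst]
    exact ⟨mul_le_of_le_one_right hlam hs1, rfl⟩
  · rintro ⟨hc, hct⟩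
    rcases hlam.eq_or_lt with rfl | hpos
    · obtain ⟨s, hs⟩ := SGN_nonempty t
      exact ⟨s, hs, by simpa using (abs_nonpos_iff.1 hc).symm⟩
    · refine ⟨c / lam, mem_SGN_iff.2 ⟨?_, ?_⟩, mul_div_cancel₀ c hpos.ne'⟩
      · rwa [abs_div, abs_of_pos hpos, div_le_one hpos]
      · rw [div_mul_eq_mul_div, hct, mul_div_cancel_left₀ _ hpos.ne']

lemma abs_le_and_mul_eq_iff_forall {lam c t : ℝ} :
    (|c| ≤ lam ∧ c * t = lam * |t|) ↔ ∀ u, c * u ≤ lam * (|t + u| - |t|) := by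
  constructor
  · rintro ⟨hc, hct⟩ u
    have : c * (t + u) ≤ lam * |t + u| :=
      (le_abs_self _).trans (by rw [abs_mul]; exact mul_le_mul_of_nonneg_right hc (abs_nonneg _))
    linarith
  · intro h
    have h0 := h (-t)
    have h2 := h t
    have hp := h (1 - t)
    have hm := h (-1 - t)
    simp only [add_neg_cancel, abs_zero, add_sub_cancel, abs_one] at h0 hp hm
    rw [← two_mul, abs_mul, abs_two] at h2
    rw [abs_neg, abs_one] at hm
    refine ⟨abs_le.2 ⟨?_, ?_⟩, ?_⟩ <;> nlinarith

lemma mul_le_of_forall_mul_le_add_sq {lam c t a : ℝ} (hlam : 0 ≤ lam)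
    (h : ∀ u, c * u ≤ lam * (|t + u| - |t|) + a * u ^ 2) (u : ℝ) :
    c * u ≤ lam * (|t + u| - |t|) := by
  -- Testing `h` at `ε u` and using convexity of `|·|` shrinks the error term to `a ε u²`.
  have hscaled : ∀ ε ∈ Set.Ioc (0 : ℝ) 1, c * u ≤ lam * (|t + u| - |t|) + a * ε * u ^ 2 := by
    rintro ε ⟨hε0, hε1⟩
    have hconv : |t + ε * u| ≤ (1 - ε) * |t| + ε * |t + u| := by
      calc |t + ε * u| = |(1 - ε) * t + ε * (t + u)| := by ring_nf
        _ ≤ |(1 - ε) * t| + |ε * (t + u)| := abs_add_le _ _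
        _ = (1 - ε) * |t| + ε * |t + u| := by
          rw [abs_mul, abs_mul, abs_of_nonneg (sub_nonneg.2 hε1), abs_of_pos hε0]
    have := h (ε * u)
    have : ε * (c * u) ≤ ε * (lam * (|t + u| - |t|) + a * ε * u ^ 2) := by
      nlinarith [mul_le_mul_of_nonneg_left hconv hlam]
    exact le_of_mul_le_mul_left this hε0
  have hlim : Tendsto (fun ε => lam * (|t + u| - |t|) + a * ε * u ^ 2) (𝓝[>] 0)
      (𝓝 (lam * (|t + u| - |t|))) := by
    have : Continuous (fun ε => lam * (|t + u| - |t|) + a * ε * u ^ 2) := by fun_prop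
    simpa using (this.tendsto 0).mono_left nhdsWithin_le_nhds
  exact ge_of_tendsto hlim (eventually_of_mem (Ioc_mem_nhdsGT one_pos) hscaled)

noncomputable def lassoObjective {n p : ℕ} (X : Matrix (Fin n) (Fin p) ℝ) (y : Fin n → ℝ)
    (lam : ℝ) (β : Fin p → ℝ) : ℝ :=
  (1 / 2) * ∑ k, ((X *ᵥ β) k - y k) ^ 2 + lam * ∑ i, |β i|

section lassoObjective

variable {n p : ℕ} (X : Matrix (Fin n) (Fin p) ℝ) (y : Fin n → ℝ) (lam : ℝ)

lemma sum_residual_mul_mulVec (β d : Fin p → ℝ) :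
    ∑ k, ((X *ᵥ β) k - y k) * (X *ᵥ d) k =
      -∑ i, (∑ k, X k i * (y k - (X *ᵥ β) k)) * d i := by
  simp only [mulVec, dotProduct, Finset.mul_sum, Finset.sum_mul, ← Finset.sum_neg_distrib]
  rw [Finset.sum_comm]
  exact Finset.sum_congr rfl fun _ _ => Finset.sum_congr rfl fun _ _ => by ring

lemma lassoObjective_add_sub (β d : Fin p → ℝ) :
    lassoObjective X y lam (β + d) - lassoObjective X y lam β =
      (1 / 2) * ∑ k, (X *ᵥ d) k ^ 2 +
        ∑ i, (lam * (|β i + d i| - |β i|) - (∑ k, X k i * (y k - (X *ᵥ β) k)) * d i) := by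
  have hsq : ∑ k, ((X *ᵥ (β + d)) k - y k) ^ 2 = ∑ k, ((X *ᵥ β) k - y k) ^ 2
      + 2 * ∑ k, ((X *ᵥ β) k - y k) * (X *ᵥ d) k + ∑ k, (X *ᵥ d) k ^ 2 := by
    simp only [mulVec_add, Pi.add_apply, Finset.mul_sum, ← Finset.sum_add_distrib]
    exact Finset.sum_congr rfl fun _ _ => by ring
  simp only [lassoObjective, hsq, sum_residual_mul_mulVec, Finset.sum_sub_distrib,
    ← Finset.mul_sum, Pi.add_apply]
  ring

lemma lassoObjective_add_single_sub (β : Fin p → ℝ) (i : Fin p) (u : ℝ) :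
    lassoObjective X y lam (β + Pi.single i u) - lassoObjective X y lam β =
      lam * (|β i + u| - |β i|) - (∑ k, X k i * (y k - (X *ᵥ β) k)) * u
        + (1 / 2 * ∑ k, X k i ^ 2) * u ^ 2 := by
  rw [lassoObjective_add_sub, Fintype.sum_eq_single i fun j hj => by simp [Pi.single_eq_of_ne hj]]
  simp only [mulVec_single, Pi.smul_apply, col_apply, op_smul_eq_mul, Pi.single_eq_same, mul_pow,
    ← Finset.sum_mul]
  ring

end lassoObjective

theorem stmt_10_general {n p : ℕ} (X : Matrix (Fin n) (Fin p) ℝ) (y : Fin n → ℝ)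
    (lam : ℝ) (hlam : 0 ≤ lam)
    (f : (Fin p → ℝ) → ℝ)
    (hf : ∀ β, f β = (1 / 2) * ∑ k, (X.mulVec β k - y k) ^ 2 + lam * ∑ i, |β i|)
    (βstar : Fin p → ℝ) :
    (∀ β : Fin p → ℝ, f βstar ≤ f β) ↔
    (∀ i : Fin p, (∑ k, X k i * (y k - X.mulVec βstar k)) ∈
      (fun s : ℝ => lam * s) '' SGN (βstar i)) := by
  obtain rfl : f = lassoObjective X y lam := funext hf
  simp only [mem_image_mul_SGN_iff hlam, abs_le_and_mul_eq_iff_forall]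
  constructor
  · intro hmin i
    refine mul_le_of_forall_mul_le_add_sq hlam (a := 1 / 2 * ∑ k, X k i ^ 2) fun u => ?_
    linarith [hmin (βstar + Pi.single i u), lassoObjective_add_single_sub X y lam βstar i u]
  · intro hsub β
    have hquad : 0 ≤ (1 / 2) * ∑ k, (X *ᵥ (β - βstar)) k ^ 2 := by positivity
    have hcoord := Finset.sum_nonneg fun i (_ : i ∈ Finset.univ) =>
      sub_nonneg.2 (hsub i ((β - βstar) i))
    have hexpand := lassoObjective_add_sub X y lam βstar (β - βstar)
    rw [add_sub_cancel] at hexpand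
    linarith

/-- A point β* ∈ ℝ^p minimizes f over ℝ^p if and only if for
every coordinate i, x_iᵀ(y − Xβ*) ∈ λ·SGN(β*_i). -/
theorem stmt_10 {n p : ℕ} (X : Matrix (Fin n) (Fin p) ℝ) (y : Fin n → ℝ)
    (lam : ℝ) (hlam : 0 ≤ lam)
    (hX : ∀ i : Fin p, Xᵀ i ≠ 0)
    (f : (Fin p → ℝ) → ℝ)
    (hf : ∀ β, f β = (1 / 2) * ∑ k, (X.mulVec β k - y k) ^ 2 + lam * ∑ i, |β i|)
    (βstar : Fin p → ℝ) :
    (∀ β : Fin p → ℝ, f βstar ≤ f β) ↔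
    (∀ i : Fin p, (∑ k, X k i * (y k - X.mulVec βstar k)) ∈
      (fun s : ℝ => lam * s) '' SGN (βstar i)) :=
  stmt_10_general X y lam hlam f hf βstar
end

section
/- For every s ∈ ℝ^p, one full cycle of coordinate descent does not increase the Lasso objective: f(T s) ≤ f(s). Moreover, if f(T s) = f(s), then T s = s and s minimizes f over ℝ^p. -/
open Matrix BigOperators

lemma key_ineq (a lam c t : ℝ) (ha : 0 < a) (hlam : 0 ≤ lam) :
    0 ≤ (a * (shrink c lam / a) - c) * (t - shrink c lam / a)
        + lam * (|t| - |shrink c lam / a|) := by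
  have h1 := le_abs_self t
  have h2 := neg_abs_le t
  unfold shrink
  split_ifs with h h'
  · have e1 : |c - lam| = c - lam := abs_of_pos (by linarith)
    rw [abs_div, abs_of_pos ha, e1, mul_div_cancel₀ _ (ne_of_gt ha)]
    have h3 : lam * (|t| - t) ≥ 0 := mul_nonneg hlam (by linarith)
    set q := (c - lam) / a
    linarith
  · have e1 : |c + lam| = -(c + lam) := abs_of_neg (by linarith)
    rw [abs_div, abs_of_pos ha, e1, mul_div_cancel₀ _ (ne_of_gt ha)]
    have h3 : lam * (|t| + t) ≥ 0 := mul_nonneg hlam (by linarith)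
    rw [neg_div]
    set q := (c + lam) / a
    linarith
  · push_neg at h h'
    simp only [zero_div, abs_zero, mul_zero, zero_mul, sub_zero, zero_sub]
    nlinarith

lemma quad_ineq (a lam c t : ℝ) (ha : 0 < a) (hlam : 0 ≤ lam) :
    a/2 * (shrink c lam / a)^2 - c * (shrink c lam / a) + lam * |shrink c lam / a|
      + a/2 * (t - shrink c lam / a)^2
    ≤ a/2 * t^2 - c * t + lam * |t| := by
  have h := key_ineq a lam c t ha hlam
  nlinarith [h]

lemma erase_split {p : ℕ} (i : Fin p) (g : Fin p → ℝ) :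
    ∑ j ∈ Finset.univ.erase i, g j
      = ∑ j ∈ Finset.univ.filter (fun j => j < i), g j
        + ∑ j ∈ Finset.univ.filter (fun j => i < j), g j := by
  rw [← Finset.sum_filter_add_sum_filter_not (Finset.univ.erase i) (fun j => j < i)]
  congr 1
  · congr 1; ext j
    simp only [Finset.mem_filter, Finset.mem_erase, Finset.mem_univ, true_and, and_true,
      ne_eq, Fin.ext_iff, Fin.lt_def]
    omega
  · congr 1; ext j
    simp only [Finset.mem_filter, Finset.mem_erase, Finset.mem_univ, true_and, and_true,
      ne_eq, Fin.ext_iff, Fin.lt_def, not_lt]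
    omega

lemma step_ineq {n p : ℕ} (X : Matrix (Fin n) (Fin p) ℝ) (y : Fin n → ℝ)
    (lam : ℝ) (hlam : 0 ≤ lam)
    (f : (Fin p → ℝ) → ℝ)
    (hf : ∀ β, f β = (1 / 2) * ∑ k, (X.mulVec β k - y k) ^ 2 + lam * ∑ i, |β i|)
    (i : Fin p) (ha : 0 < ∑ k, (X k i)^2)
    (β β' : Fin p → ℝ) (hβ' : ∀ j, j ≠ i → β' j = β j)
    (hi : β' i = shrink (∑ k, X k i * y k
        - ∑ j ∈ Finset.univ.erase i, (∑ k, X k i * X k j) * β j) lam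
        / ∑ k, (X k i)^2) :
    f β' + (∑ k, (X k i)^2)/2 * (β i - β' i)^2 ≤ f β := by
  set a := ∑ k, (X k i)^2 with ha_def
  set c := ∑ k, X k i * y k - ∑ j ∈ Finset.univ.erase i, (∑ k, X k i * X k j) * β j with hc_def
  set d : Fin n → ℝ := fun k => (∑ j ∈ Finset.univ.erase i, X k j * β j) - y k with hd_def
  have expand : ∀ v : Fin p → ℝ, (∀ j, j ≠ i → v j = β j) →
      f v = a/2 * (v i)^2 - c * (v i) + lam * |v i|
        + (1/2 * ∑ k, (d k)^2 + lam * ∑ j ∈ Finset.univ.erase i, |β j|) := by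
    intro v hv
    rw [hf]
    have h1 : ∀ k, X.mulVec v k - y k = X k i * v i + d k := by
      intro k
      simp only [Matrix.mulVec, dotProduct, hd_def]
      rw [← Finset.add_sum_erase _ _ (Finset.mem_univ i),
        Finset.sum_congr rfl (fun j hj => by rw [hv j (Finset.ne_of_mem_erase hj)])]
      ring
    have h2 : ∑ k, (X.mulVec v k - y k)^2
        = a * (v i)^2 + 2 * (v i) * (∑ k, X k i * d k) + ∑ k, (d k)^2 := by
      simp only [h1]
      rw [Finset.sum_congr rfl (fun k _ => (by ring :
        (X k i * v i + d k)^2 = (X k i)^2 * (v i)^2 + (X k i * d k) * (2 * v i) + (d k)^2))]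
      rw [Finset.sum_add_distrib, Finset.sum_add_distrib, ← Finset.sum_mul, ← Finset.sum_mul]
      ring
    have h3 : ∑ k, X k i * d k = -c := by
      simp only [hd_def, hc_def, mul_sub, Finset.sum_sub_distrib, Finset.mul_sum]
      rw [Finset.sum_comm]
      have : ∀ j ∈ Finset.univ.erase i, (∑ k, X k i * (X k j * β j))
          = (∑ k, X k i * X k j) * β j := by
        intro j _
        rw [Finset.sum_mul]
        exact Finset.sum_congr rfl fun k _ => by ring
      rw [Finset.sum_congr rfl this]
      ring
    have h4 : ∑ j, |v j| = |v i| + ∑ j ∈ Finset.univ.erase i, |β j| := by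
      rw [← Finset.add_sum_erase _ _ (Finset.mem_univ i)]
      congr 1
      exact Finset.sum_congr rfl fun j hj => by rw [hv j (Finset.ne_of_mem_erase hj)]
    rw [h2, h3, h4]
    ring
  have hb := expand β (fun _ _ => rfl)
  have hb' := expand β' hβ'
  have hq := quad_ineq a lam c (β i) ha hlam
  rw [hb, hb', hi]
  linarith

/-- For every s ∈ ℝ^p, one full cycle T of coordinate descent
does not increase the Lasso objective: f(Ts) ≤ f(s).  Moreover, if
f(Ts) = f(s), then Ts = s and s minimizes f over ℝ^p.  Here T satisfies
(Ts)_i = S(x_iᵀy − Σ_{j<i} x_iᵀx_j (Ts)_j − Σ_{j>i} x_iᵀx_j s_j, λ)/‖x_i‖₂². -/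
theorem stmt_11 {n p : ℕ} (X : Matrix (Fin n) (Fin p) ℝ) (y : Fin n → ℝ)
    (lam : ℝ) (hlam : 0 ≤ lam)
    (hX : ∀ i : Fin p, Xᵀ i ≠ 0)
    (f : (Fin p → ℝ) → ℝ)
    (hf : ∀ β, f β = (1 / 2) * ∑ k, (X.mulVec β k - y k) ^ 2 + lam * ∑ i, |β i|)
    (T : (Fin p → ℝ) → (Fin p → ℝ))
    (hT : ∀ (s : Fin p → ℝ) (i : Fin p), T s i =
      shrink (∑ k, X k i * y k
          - ∑ j ∈ Finset.univ.filter (fun j => j < i), (Xᵀ * X) i j * T s j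
          - ∑ j ∈ Finset.univ.filter (fun j => i < j), (Xᵀ * X) i j * s j) lam
        / ∑ k, (X k i) ^ 2) :
    ∀ s : Fin p → ℝ,
      f (T s) ≤ f s ∧
      (f (T s) = f s → T s = s ∧ ∀ β : Fin p → ℝ, f s ≤ f β) := by
  have hapos : ∀ i : Fin p, 0 < ∑ k, (X k i)^2 := by
    intro i
    have h := hX i
    have hex : ∃ k, X k i ≠ 0 := by
      by_contra hc; push_neg at hc
      exact h (funext fun k => by simpa [Matrix.transpose_apply] using hc k)
    obtain ⟨k0, hk0⟩ := hex
    exact Finset.sum_pos' (fun k _ => sq_nonneg _) ⟨k0, Finset.mem_univ _, by positivity⟩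
  have hG : ∀ i j : Fin p, (Xᵀ * X) i j = ∑ k, X k i * X k j := fun i j => by
    simp [Matrix.mul_apply, Matrix.transpose_apply]
  have hmv : ∀ (v : Fin p → ℝ) k, X.mulVec v k = ∑ j, X k j * v j := fun v k => by
    simp [Matrix.mulVec, dotProduct]
  intro s
  set u : ℕ → Fin p → ℝ := fun m j => if (j:ℕ) < m then T s j else s j with hu
  have hu0 : u 0 = s := funext fun j => if_neg (by omega)
  have hup : u p = T s := funext fun j => if_pos j.isLt
  have hstep : ∀ (m : ℕ) (hm : m < p),
      f (u (m+1)) + (∑ k, (X k (⟨m,hm⟩ : Fin p))^2)/2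
        * (s ⟨m,hm⟩ - T s ⟨m,hm⟩)^2 ≤ f (u m) := by
    intro m hm
    have h1 : ∀ j, j ≠ (⟨m,hm⟩ : Fin p) → u (m+1) j = u m j := by
      intro j hj
      show (if (j:ℕ) < m+1 then T s j else s j) = (if (j:ℕ) < m then T s j else s j)
      have hne : (j:ℕ) ≠ m := fun h => hj (Fin.ext h)
      by_cases hc : (j:ℕ) < m
      · rw [if_pos (by omega), if_pos hc]
      · rw [if_neg (by omega), if_neg hc]
    have h2 : u (m+1) ⟨m,hm⟩ = T s ⟨m,hm⟩ := if_pos (Nat.lt_succ_self m)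
    have h3 : u m ⟨m,hm⟩ = s ⟨m,hm⟩ := if_neg (lt_irrefl m)
    have hc : ∑ j ∈ Finset.univ.erase (⟨m,hm⟩:Fin p),
          (∑ k, X k ⟨m,hm⟩ * X k j) * (u m) j
        = (∑ j ∈ Finset.univ.filter (fun j => j < (⟨m,hm⟩:Fin p)),
            (Xᵀ*X) ⟨m,hm⟩ j * T s j)
          + ∑ j ∈ Finset.univ.filter (fun j => (⟨m,hm⟩:Fin p) < j),
              (Xᵀ*X) ⟨m,hm⟩ j * s j := by
      rw [erase_split]
      congr 1
      · refine Finset.sum_congr rfl fun j hj => ?_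
        simp only [Finset.mem_filter, Finset.mem_univ, true_and] at hj
        have hjm : (j:ℕ) < m := hj
        have : u m j = T s j := if_pos hjm
        rw [this, hG]
      · refine Finset.sum_congr rfl fun j hj => ?_
        simp only [Finset.mem_filter, Finset.mem_univ, true_and] at hj
        have hjm : m < (j:ℕ) := hj
        have : u m j = s j := if_neg (by omega)
        rw [this, hG]
    have hi' : u (m+1) ⟨m,hm⟩ = shrink (∑ k, X k ⟨m,hm⟩ * y k
        - ∑ j ∈ Finset.univ.erase (⟨m,hm⟩:Fin p),
            (∑ k, X k ⟨m,hm⟩ * X k j) * (u m) j) lam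
        / ∑ k, (X k (⟨m,hm⟩:Fin p))^2 := by
      rw [h2, hT s ⟨m,hm⟩, hc, sub_add_eq_sub_sub]
    have hs := step_ineq X y lam hlam f hf ⟨m,hm⟩ (hapos _) (u m) (u (m+1)) h1 hi'
    rw [h3, h2] at hs
    exact hs
  have hchain : ∀ m, m ≤ p → f (u m)
      + ∑ j ∈ Finset.univ.filter (fun j : Fin p => (j:ℕ) < m),
          (∑ k, (X k j)^2)/2 * (s j - T s j)^2 ≤ f s := by
    intro m
    induction m with
    | zero =>
        intro _
        have he : Finset.univ.filter (fun j : Fin p => (j:ℕ) < 0) = ∅ := by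
          ext j; simp
        rw [hu0, he, Finset.sum_empty]
        simp
    | succ m ih =>
        intro hm1
        have hm : m < p := hm1
        have hstep' := hstep m hm
        have hins : Finset.univ.filter (fun j : Fin p => (j:ℕ) < m+1)
            = insert (⟨m,hm⟩ : Fin p) (Finset.univ.filter (fun j : Fin p => (j:ℕ) < m)) := by
          ext j
          simp only [Finset.mem_filter, Finset.mem_univ, true_and, Finset.mem_insert,
            Fin.ext_iff]
          omega
        rw [hins, Finset.sum_insert (by simp)]
        have ih' := ih (Nat.le_of_succ_le hm1)
        linarith
  have hfil : Finset.univ.filter (fun j : Fin p => (j:ℕ) < p) = Finset.univ := by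
    ext j; simp [j.isLt]
  have hfinal : f (T s) + ∑ j, (∑ k, (X k j)^2)/2 * (s j - T s j)^2 ≤ f s := by
    have h := hchain p le_rfl
    rw [hup, hfil] at h
    exact h
  have hterm_nonneg : ∀ j : Fin p, 0 ≤ (∑ k, (X k j)^2)/2 * (s j - T s j)^2 :=
    fun j => mul_nonneg (by positivity) (sq_nonneg _)
  have hsumnn : 0 ≤ ∑ j, (∑ k, (X k j)^2)/2 * (s j - T s j)^2 :=
    Finset.sum_nonneg fun j _ => hterm_nonneg j
  refine ⟨by linarith, fun heq => ?_⟩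
  have hzero : ∑ j, (∑ k, (X k j)^2)/2 * (s j - T s j)^2 = 0 :=
    le_antisymm (by linarith) hsumnn
  have hTs : T s = s := by
    funext j
    have hz := (Finset.sum_eq_zero_iff_of_nonneg (fun j _ => hterm_nonneg j)).1 hzero
      j (Finset.mem_univ j)
    have ha := hapos j
    have hsq0 : (s j - T s j)^2 = 0 := by
      rcases mul_eq_zero.1 hz with h|h
      · exfalso; have : (∑ k, (X k j)^2)/2 > 0 := by positivity
        linarith
      · exact h
    have hsz : s j - T s j = 0 := by
      have := sq_eq_zero_iff.1 hsq0
      exact this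
    linarith
  refine ⟨hTs, ?_⟩
  -- coordinatewise fixed-point characterization
  have hsi : ∀ i : Fin p, s i = shrink (∑ k, X k i * y k
      - ∑ j ∈ Finset.univ.erase i, (∑ k, X k i * X k j) * s j) lam
      / ∑ k, (X k i)^2 := by
    intro i
    have h := hT s i
    rw [hTs] at h
    simp only [hG] at h
    rw [erase_split i (fun j => (∑ k, X k i * X k j) * s j), sub_add_eq_sub_sub]
    exact h
  set b : Fin p → ℝ := fun i => (∑ j, (∑ k, X k i * X k j) * s j) - ∑ k, X k i * y k
    with hb
  have hbrel : ∀ i : Fin p, (∑ k, (X k i)^2) * s i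
      - (∑ k, X k i * y k - ∑ j ∈ Finset.univ.erase i, (∑ k, X k i * X k j) * s j)
      = b i := by
    intro i
    have h0 : ∑ j, (∑ k, X k i * X k j) * s j
        = (∑ k, (X k i)^2) * s i + ∑ j ∈ Finset.univ.erase i, (∑ k, X k i * X k j) * s j := by
      rw [← Finset.add_sum_erase _ _ (Finset.mem_univ i)]
      congr 1
      congr 1
      exact Finset.sum_congr rfl fun k _ => by ring
    simp only [hb]
    rw [h0]
    ring
  have hkey : ∀ (i : Fin p) (t : ℝ), 0 ≤ b i * (t - s i) + lam * (|t| - |s i|) := by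
    intro i t
    have h := key_ineq (∑ k, (X k i)^2) lam (∑ k, X k i * y k
      - ∑ j ∈ Finset.univ.erase i, (∑ k, X k i * X k j) * s j) t (hapos i) hlam
    rw [← hsi i, hbrel i] at h
    exact h
  intro β
  have hE : ∀ k, X.mulVec β k - y k
      = (X.mulVec s k - y k) + ∑ j, X k j * (β j - s j) := by
    intro k
    simp only [hmv, mul_sub]
    rw [Finset.sum_sub_distrib]
    ring
  have hsq : ∑ k, (X.mulVec β k - y k)^2
      = ∑ k, (X.mulVec s k - y k)^2
        + (∑ k, (X.mulVec s k - y k) * (∑ j, X k j * (β j - s j))) * 2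
        + ∑ k, (∑ j, X k j * (β j - s j))^2 := by
    have h1 : ∀ k, (X.mulVec β k - y k)^2
        = (X.mulVec s k - y k)^2
          + (X.mulVec s k - y k) * (∑ j, X k j * (β j - s j)) * 2
          + (∑ j, X k j * (β j - s j))^2 := by
      intro k
      rw [hE k]; ring
    rw [Finset.sum_congr rfl fun k _ => h1 k, Finset.sum_add_distrib,
      Finset.sum_add_distrib, Finset.sum_mul]
  have hswap : ∑ k, (X.mulVec s k - y k) * (∑ j, X k j * (β j - s j))
      = ∑ j, b j * (β j - s j) := by
    have h1 : ∀ k, (X.mulVec s k - y k) * (∑ j, X k j * (β j - s j))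
        = ∑ j, (X.mulVec s k - y k) * (X k j * (β j - s j)) := fun k => Finset.mul_sum _ _ _
    rw [Finset.sum_congr rfl fun k _ => h1 k, Finset.sum_comm]
    refine Finset.sum_congr rfl fun j _ => ?_
    have h2 : ∀ k, (X.mulVec s k - y k) * (X k j * (β j - s j))
        = (X k j * (X.mulVec s k) - X k j * y k) * (β j - s j) := fun k => by ring
    rw [Finset.sum_congr rfl fun k _ => h2 k, ← Finset.sum_mul]
    congr 1
    rw [Finset.sum_sub_distrib]
    simp only [hb]
    congr 1
    simp only [hmv]
    have h3 : ∀ k : Fin n, X k j * (∑ l, X k l * s l) = ∑ l, X k j * (X k l * s l) :=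
      fun k => Finset.mul_sum _ _ _
    rw [Finset.sum_congr rfl fun k _ => h3 k, Finset.sum_comm]
    refine Finset.sum_congr rfl fun l _ => ?_
    rw [Finset.sum_mul]
    exact Finset.sum_congr rfl fun k _ => by ring
  have hsplit : ∑ j, (b j * (β j - s j) + lam * (|β j| - |s j|))
      = (∑ j, b j * (β j - s j)) + (lam * ∑ j, |β j| - lam * ∑ j, |s j|) := by
    rw [Finset.sum_add_distrib]
    congr 1
    rw [← Finset.mul_sum, Finset.sum_sub_distrib, mul_sub]
  have hpos1 : 0 ≤ ∑ j, (b j * (β j - s j) + lam * (|β j| - |s j|)) :=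
    Finset.sum_nonneg fun j _ => hkey j (β j)
  have hpos2 : 0 ≤ ∑ k, (∑ j, X k j * (β j - s j))^2 :=
    Finset.sum_nonneg fun k _ => sq_nonneg _
  rw [hf β, hf s, hsq]
  linarith [hswap, hsplit, hpos1, hpos2]
end

section
/- Let s'', s', s, β', β ∈ ℝ^p and α', α ∈ ℝ with α' ≠ 0 satisfy β' = (L+D)^{−1}(Xᵀy − U s''), s' = (1−α')s'' + α'β', β = (L+D)^{−1}(Xᵀy − U s'), and s = (1−α)s' + αβ. Then s − s' = α·[G + ((1−α')/α')·I]·(s' − s''), where I is the p×p identity matrix. -/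
open Matrix BigOperators

/-- Let s'', s', s, β', β ∈ ℝ^p and α', α ∈ ℝ with α' ≠ 0
satisfy β' = (L+D)⁻¹(Xᵀy − U s''), s' = (1−α')s'' + α'β',
β = (L+D)⁻¹(Xᵀy − U s'), and s = (1−α)s' + αβ.  Then
s − s' = α·[G + ((1−α')/α')·I]·(s' − s''). -/
theorem stmt_12 {n p : ℕ} (X : Matrix (Fin n) (Fin p) ℝ) (y : Fin n → ℝ)
    (hX : ∀ i : Fin p, Xᵀ i ≠ 0)
    (L D U G : Matrix (Fin p) (Fin p) ℝ)
    (hL : ∀ i j, L i j = if j < i then (Xᵀ * X) i j else 0)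
    (hD : ∀ i j, D i j = if i = j then (Xᵀ * X) i j else 0)
    (hU : ∀ i j, U i j = if i < j then (Xᵀ * X) i j else 0)
    (hG : G = -((L + D)⁻¹ * U))
    (s'' s' s β' β : Fin p → ℝ) (α' α : ℝ) (hα' : α' ≠ 0)
    (hβ' : β' = (L + D)⁻¹.mulVec (Xᵀ.mulVec y - U.mulVec s''))
    (hs' : s' = (1 - α') • s'' + α' • β')
    (hβ : β = (L + D)⁻¹.mulVec (Xᵀ.mulVec y - U.mulVec s'))
    (hs : s = (1 - α) • s' + α • β) :
    s - s' = α • (G + ((1 - α') / α') • (1 : Matrix (Fin p) (Fin p) ℝ)).mulVec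
      (s' - s'') := by
  have hds : s' - s'' = α' • (β' - s'') := by
    rw [hs']; ext i; simp; ring
  have hβ's' : β' - s' = ((1 - α') / α') • (s' - s'') := by
    rw [hds, hs']
    ext i; simp [smul_sub]
    field_simp
    ring
  have hββ' : β - β' = G.mulVec (s' - s'') := by
    rw [hβ, hβ', hG]
    rw [← Matrix.mulVec_sub]
    have : (Xᵀ.mulVec y - U.mulVec s') - (Xᵀ.mulVec y - U.mulVec s'') =
        U.mulVec (s'' - s') := by
      rw [Matrix.mulVec_sub]; ext i; simp
    rw [this, Matrix.mulVec_mulVec]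
    ext i
    simp [Matrix.neg_mulVec, Matrix.mulVec_sub]
    ring
  have hss' : s - s' = α • (β - s') := by
    rw [hs]; ext i; simp; ring
  have hβs' : β - s' = (β - β') + (β' - s') := by ext i; simp
  rw [hss', hβs', hββ', hβ's']
  rw [Matrix.add_mulVec, Matrix.smul_mulVec, Matrix.one_mulVec]
end

section
/- Let c, b ∈ ℝ, d > 0, and λ ≥ 0. Then d·b = S(c + d·b, λ) if and only if c ∈ λ·SGN(b), where λ·SGN(t) denotes the set {λs : s ∈ SGN(t)}. -/
/-- Let c, b ∈ ℝ, d > 0, and λ ≥ 0.  Then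
d·b = S(c + d·b, λ) if and only if c ∈ λ·SGN(b). -/
theorem stmt_18 (c b d lam : ℝ) (hd : 0 < d) (hlam : 0 ≤ lam) :
    d * b = shrink (c + d * b) lam ↔ c ∈ (fun s : ℝ => lam * s) '' SGN b := by
  rcases lt_trichotomy b 0 with hb | hb | hb
  · have hdb : d * b < 0 := mul_neg_of_pos_of_neg hd hb
    simp only [SGN, if_neg (not_lt.mpr hb.le), if_pos hb, Set.image_singleton,
      Set.mem_singleton_iff, mul_neg_one]
    unfold shrink
    split_ifs with h1 h2 <;> constructor <;> intro h <;> nlinarith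
  · subst hb
    simp only [mul_zero, add_zero]
    have hs0 : SGN 0 = Set.Icc (-1 : ℝ) 1 := by
      unfold SGN; simp
    rw [hs0]
    unfold shrink
    constructor
    · intro h
      split_ifs at h with h1 h2
      · exact absurd h1 (by linarith)
      · exact absurd h2 (by linarith)
      · push_neg at h1 h2
        by_cases hl : lam = 0
        · exact ⟨0, by norm_num, by simp [hl]; linarith⟩
        · have hlp : 0 < lam := lt_of_le_of_ne hlam (Ne.symm hl)
          refine ⟨c / lam, ⟨?_, ?_⟩, by field_simp⟩
          · rw [neg_le, ← neg_div]
            exact (div_le_one hlp).mpr (by linarith)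
          · exact (div_le_one hlp).mpr (by linarith)
    · rintro ⟨s, ⟨hs1, hs2⟩, rfl⟩
      dsimp only
      have h1 : lam * s ≤ lam := by nlinarith
      have h2 : -lam ≤ lam * s := by nlinarith
      split_ifs with g1 g2
      · linarith
      · linarith
      · rfl
  · have hdb : 0 < d * b := mul_pos hd hb
    simp only [SGN, if_pos hb, Set.image_singleton, Set.mem_singleton_iff, mul_one]
    unfold shrink
    split_ifs with h1 h2 <;> constructor <;> intro h <;> nlinarith
end
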